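/- Let L_1,L_2 be functions regularly varying at infinity with indices β_1,β_2∈ℝ respectively, and let Z_1,Z_2 be independent real random variables with P(e^{Z_i}>u) ~ L_i(u)Ψ(log u) as u→∞ for i=1,2, and let σ_1,σ_2>0. Then for every a>0, P(e^{σ_1Z_1+σ_2Z_2}>u) ~ P(e^{σ_1Z_1+σ_2Z_2}>u, e^{σ_1Z_1}>a, e^{σ_2Z_2}>a) as u→∞. -/

import Mathlib

open MeasureTheory ProbabilityTheory Filter Real Set

/-- Survival function of the standard normal distribution: `Ψ x = P(Z > x)` for `Z ~ N(0,1)`. -/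
noncomputable def stdGaussianSurvival (x : ℝ) : ℝ :=
  ((gaussianReal 0 1) (Set.Ioi x)).toReal

/-- `L` is regularly varying at infinity with index `β`. -/
def RegVary (L : ℝ → ℝ) (β : ℝ) : Prop :=
  ∀ l : ℝ, 0 < l → Tendsto (fun u => L (l * u) / L u) atTop (nhds (l ^ β))

/-- Asymptotic equivalence at infinity: `f u / g u → 1` as `u → ∞`. -/
def AsymEquiv (f g : ℝ → ℝ) : Prop :=
  Tendsto (fun u => f u / g u) atTop (nhds 1)

/-!
On the event `e^{σ₁Z₁ + σ₂Z₂} > u`, if one factor is at most `a` then the other exceeds `u / a`;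
so it suffices that `P(e^{σ₂Z₂} > u / a) = o(P(e^{σ₁Z₁ + σ₂Z₂} > u))`, and symmetrically.
By independence, `P(e^{σ₁Z₁ + σ₂Z₂} > u) ≥ P(e^{σ₁Z₁} > 2a) · P(e^{σ₂Z₂} > u / (2a))`, and the
tail of `e^{σ₂Z₂}` is rapidly varying: since `Ψ (x + c) ≤ e^{-cx} Ψ x`, the Gaussian factor of
`L(u) Ψ(log u)` beats the regularly varying one, so the tail drops by a factor tending to `0`
when `u` is doubled.
-/

open Topology

local notation "Ψ" => stdGaussianSurvival

section GaussianTail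

lemma stdGaussianSurvival_eq_integral (x : ℝ) : Ψ x = ∫ t in Ioi x, gaussianPDFReal 0 1 t := by
  rw [stdGaussianSurvival, gaussianReal_apply_eq_integral 0 one_ne_zero, ENNReal.toReal_ofReal]
  exact setIntegral_nonneg measurableSet_Ioi fun t _ => gaussianPDFReal_nonneg 0 1 t

lemma stdGaussianSurvival_pos (x : ℝ) : 0 < Ψ x := by
  refine ENNReal.toReal_pos (fun h => ?_) (measure_ne_top _ _)
  simpa using gaussianReal_absolutelyContinuous' 0 one_ne_zero h

lemma gaussianPDFReal_zero_one_add (t c : ℝ) :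
    gaussianPDFReal 0 1 (t + c) = exp (-(c * t) - c ^ 2 / 2) * gaussianPDFReal 0 1 t := by
  simp only [gaussianPDFReal, sub_zero, NNReal.coe_one, mul_one]
  rw [mul_left_comm, ← exp_add]
  ring_nf

lemma stdGaussianSurvival_add_le (x : ℝ) {c : ℝ} (hc : 0 ≤ c) :
    Ψ (x + c) ≤ exp (-(c * x)) * Ψ x := by
  have hshift : Ψ (x + c) = ∫ t in Ioi x, gaussianPDFReal 0 1 (t + c) := by
    rw [stdGaussianSurvival_eq_integral,
      ← (measurePreserving_add_right volume c).setIntegral_preimage_emb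
        (measurableEmbedding_addRight c), preimage_add_const_Ioi, add_sub_cancel_right]
  rw [hshift, stdGaussianSurvival_eq_integral, ← integral_const_mul]
  refine setIntegral_mono_on ((integrable_gaussianPDFReal 0 1).comp_add_right c).integrableOn
    ((integrable_gaussianPDFReal 0 1).const_mul _).integrableOn measurableSet_Ioi fun t ht => ?_
  rw [gaussianPDFReal_zero_one_add]
  exact mul_le_mul_of_nonneg_right (exp_le_exp.2 (by nlinarith [mem_Ioi.1 ht, sq_nonneg c]))
    (gaussianPDFReal_nonneg 0 1 t)

lemma tendsto_stdGaussianSurvival_add_div {c : ℝ} (hc : 0 < c) :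
    Tendsto (fun x => Ψ (x + c) / Ψ x) atTop (𝓝 0) := by
  have hexp : Tendsto (fun x => exp (-(c * x))) atTop (𝓝 0) :=
    tendsto_exp_neg_atTop_nhds_zero.comp (tendsto_id.const_mul_atTop hc)
  refine squeeze_zero (fun x => div_nonneg (stdGaussianSurvival_pos _).le
    (stdGaussianSurvival_pos x).le) (fun x => ?_) hexp
  rw [div_le_iff₀ (stdGaussianSurvival_pos x)]
  exact stdGaussianSurvival_add_le x hc.le

end GaussianTail

lemma AsymEquiv.eventually_ne_zero {F G : ℝ → ℝ} (h : AsymEquiv F G) :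
    ∀ᶠ u in atTop, F u ≠ 0 ∧ G u ≠ 0 :=
  (h.eventually_ne one_ne_zero).mono fun _ hu => div_ne_zero_iff.1 hu

lemma AsymEquiv.eventually_pos {F G : ℝ → ℝ} (h : AsymEquiv F G) (hF : ∀ u, 0 ≤ F u) :
    ∀ᶠ u in atTop, 0 < F u :=
  h.eventually_ne_zero.mono fun u hu => (hF u).lt_of_ne' hu.1

lemma asymEquiv_of_le_of_le_add {f g e : ℝ → ℝ} (hgf : ∀ᶠ u in atTop, g u ≤ f u)
    (hfg : ∀ᶠ u in atTop, f u ≤ g u + e u) (hf : ∀ᶠ u in atTop, 0 < f u)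
    (he : Tendsto (fun u => e u / f u) atTop (𝓝 0)) : AsymEquiv f g := by
  have hgf_lim : Tendsto (fun u => g u / f u) atTop (𝓝 1) := by
    refine tendsto_of_tendsto_of_tendsto_of_le_of_le' (by simpa using he.const_sub 1)
      tendsto_const_nhds ?_ ?_
    · filter_upwards [hfg, hf] with u hu hfu
      rw [one_sub_div hfu.ne']
      gcongr
      linarith
    · filter_upwards [hgf, hf] with u hu hfu
      exact div_le_one_of_le₀ hu hfu.le
  simpa [AsymEquiv] using hgf_lim.inv₀ one_ne_zero

/-- Rapid variation with index `-∞` (de Haan), in its decaying half `l > 1`. -/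
def RapidVary (F : ℝ → ℝ) : Prop :=
  ∀ l : ℝ, 1 < l → Tendsto (fun u => F (l * u) / F u) atTop (𝓝 0)

lemma RapidVary.congr {F G : ℝ → ℝ} (hF : RapidVary F) (h : F =ᶠ[atTop] G) :
    RapidVary G := by
  intro l hl
  refine (hF l hl).congr' ?_
  have hlu : Tendsto (fun u => l * u) atTop atTop :=
    (tendsto_const_mul_atTop_of_pos (by linarith)).2 tendsto_id
  filter_upwards [h, hlu.eventually h] with u hu hlu_eq
  rw [hu]
  exact congrArg (· / G u) hlu_eq

lemma RapidVary.comp_rpow {F : ℝ → ℝ} (hF : RapidVary F) {σ : ℝ} (hσ : 0 < σ) :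
    RapidVary fun u => F (u ^ σ) := by
  intro l hl
  refine ((hF (l ^ σ) (one_lt_rpow hl hσ)).comp (tendsto_rpow_atTop hσ)).congr' ?_
  filter_upwards [eventually_ge_atTop 0] with u hu
  simp only [Function.comp_apply, mul_rpow (by linarith : (0 : ℝ) ≤ l) hu]

lemma RapidVary.of_asymEquiv {F G : ℝ → ℝ} (hG : RapidVary G) (h : AsymEquiv F G) :
    RapidVary F := by
  intro l hl
  have hlu : Tendsto (fun u => l * u) atTop atTop :=
    (tendsto_const_mul_atTop_of_pos (by linarith)).2 tendsto_id
  have hlim := ((h.comp hlu).mul (hG l hl)).div h one_ne_zero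
  rw [one_mul, zero_div] at hlim
  refine hlim.congr' ?_
  filter_upwards [h.eventually_ne_zero, hlu.eventually h.eventually_ne_zero]
    with u ⟨hFu, hGu⟩ ⟨hFlu, hGlu⟩
  simp only [Pi.div_apply, Function.comp_apply]
  field_simp

lemma RegVary.rapidVary_mul_stdGaussianSurvival_log {L : ℝ → ℝ} {β : ℝ}
    (hL : RegVary L β) : RapidVary fun u => L u * Ψ (log u) := by
  intro l hl
  have hlim := (hL l (by linarith)).mul
    ((tendsto_stdGaussianSurvival_add_div (log_pos hl)).comp tendsto_log_atTop)
  rw [mul_zero] at hlim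
  refine hlim.congr' ?_
  filter_upwards [eventually_gt_atTop 0] with u hu
  rw [log_mul (by linarith) hu.ne', add_comm, mul_div_mul_comm]
  rfl

lemma lt_exp_mul_iff {σ v z : ℝ} (hσ : 0 < σ) (hv : 0 < v) :
    v < exp (σ * z) ↔ v ^ σ⁻¹ < exp z := by
  rw [← log_lt_iff_lt_exp hv, ← log_lt_iff_lt_exp (rpow_pos_of_pos hv _), log_rpow hv,
    inv_mul_lt_iff₀ hσ]

section ExpTails

variable {Ω : Type*} [MeasurableSpace Ω] {P : Measure Ω}

lemma measureReal_lt_exp_const_mul_eventuallyEq (Z : Ω → ℝ) {σ : ℝ} (hσ : 0 < σ) :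
    (fun u => P.real {ω | u < exp (σ * Z ω)}) =ᶠ[atTop]
      fun u => P.real {ω | u ^ σ⁻¹ < exp (Z ω)} := by
  filter_upwards [eventually_gt_atTop 0] with u hu
  simp_rw [lt_exp_mul_iff hσ hu]

lemma eventually_measureReal_lt_exp_const_mul_pos {Z : Ω → ℝ} {G : ℝ → ℝ}
    (hZ : AsymEquiv (fun u => P.real {ω | u < exp (Z ω)}) G) {σ : ℝ} (hσ : 0 < σ) :
    ∀ᶠ u in atTop, 0 < P.real {ω | u < exp (σ * Z ω)} := by
  filter_upwards [measureReal_lt_exp_const_mul_eventuallyEq Z hσ,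
    (tendsto_rpow_atTop (inv_pos.2 hσ)).eventually
      (hZ.eventually_pos fun _ => measureReal_nonneg)] with u hu hpos
  rw [hu]
  exact hpos

lemma rapidVary_measureReal_lt_exp_const_mul {Z : Ω → ℝ} {L : ℝ → ℝ} {β : ℝ}
    (hL : RegVary L β)
    (hZ : AsymEquiv (fun u => P.real {ω | u < exp (Z ω)}) fun u => L u * Ψ (log u))
    {σ : ℝ} (hσ : 0 < σ) : RapidVary fun u => P.real {ω | u < exp (σ * Z ω)} :=
  ((hL.rapidVary_mul_stdGaussianSurvival_log.of_asymEquiv hZ).comp_rpow (inv_pos.2 hσ)).congr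
    (measureReal_lt_exp_const_mul_eventuallyEq Z hσ).symm

variable [IsFiniteMeasure P] {X Y : Ω → ℝ}

lemma measureReal_lt_exp_pos_of_eventually (h : ∀ᶠ u in atTop, 0 < P.real {ω | u < exp (X ω)})
    (q : ℝ) : 0 < P.real {ω | q < exp (X ω)} := by
  obtain ⟨v, hv, hqv⟩ := (h.and (eventually_ge_atTop q)).exists
  exact hv.trans_le (measureReal_mono fun ω hω => hqv.trans_lt hω)

lemma measureReal_lt_exp_add_le {a : ℝ} (ha : 0 < a) (u : ℝ) :
    P.real {ω | u < exp (X ω + Y ω)} ≤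
      P.real {ω | u < exp (X ω + Y ω) ∧ a < exp (X ω) ∧ a < exp (Y ω)} +
        (P.real {ω | u / a < exp (X ω)} + P.real {ω | u / a < exp (Y ω)}) := by
  refine le_trans ?_ ((measureReal_union_le _ _).trans
    (add_le_add le_rfl (measureReal_union_le _ _)))
  refine measureReal_mono fun ω hω => ?_
  have hprod : u < exp (X ω) * exp (Y ω) := by rw [← exp_add]; exact hω
  simp only [mem_union, mem_ofPred_eq, div_lt_iff₀ ha]
  rcases le_or_gt (exp (Y ω)) a with hY | hY
  · exact Or.inr (Or.inl (by nlinarith [exp_pos (X ω)]))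
  rcases le_or_gt (exp (X ω)) a with hX | hX
  · exact Or.inr (Or.inr (by nlinarith [exp_pos (Y ω)]))
  · exact Or.inl ⟨hω, hX, hY⟩

namespace ProbabilityTheory.IndepFun

lemma mul_measureReal_lt_exp_le (hXY : IndepFun X Y P) {s t : ℝ} (hs : 0 ≤ s) (ht : 0 ≤ t) :
    P.real {ω | s < exp (X ω)} * P.real {ω | t < exp (Y ω)} ≤
      P.real {ω | s * t < exp (X ω + Y ω)} := by
  have hmeas (r : ℝ) : MeasurableSet {x : ℝ | r < exp x} :=
    measurableSet_lt measurable_const measurable_exp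
  calc P.real {ω | s < exp (X ω)} * P.real {ω | t < exp (Y ω)}
      = P.real (X ⁻¹' {x | s < exp x} ∩ Y ⁻¹' {y | t < exp y}) := by
        simp only [measureReal_def, hXY.measure_inter_preimage_eq_mul _ _ (hmeas s) (hmeas t),
          ENNReal.toReal_mul]
        rfl
    _ ≤ P.real {ω | s * t < exp (X ω + Y ω)} := measureReal_mono fun ω ⟨hx, hy⟩ => by
        rw [mem_ofPred_eq, exp_add]
        exact mul_lt_mul'' hx hy hs ht

lemma eventually_measureReal_lt_exp_add_pos (hXY : IndepFun X Y P)
    (hXpos : ∀ᶠ u in atTop, 0 < P.real {ω | u < exp (X ω)})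
    (hYpos : ∀ᶠ u in atTop, 0 < P.real {ω | u < exp (Y ω)}) :
    ∀ᶠ u in atTop, 0 < P.real {ω | u < exp (X ω + Y ω)} := by
  filter_upwards [hYpos, eventually_ge_atTop 0] with u hu hu0
  have hmul := hXY.mul_measureReal_lt_exp_le zero_le_one hu0
  rw [one_mul] at hmul
  exact (mul_pos (measureReal_lt_exp_pos_of_eventually hXpos 1) hu).trans_le hmul

lemma tendsto_measureReal_lt_exp_div_measureReal_lt_exp_add (hXY : IndepFun X Y P)
    (hXpos : ∀ᶠ u in atTop, 0 < P.real {ω | u < exp (X ω)})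
    (hYpos : ∀ᶠ u in atTop, 0 < P.real {ω | u < exp (Y ω)})
    (hY : RapidVary fun u => P.real {ω | u < exp (Y ω)}) {a : ℝ} (ha : 0 < a) :
    Tendsto (fun u => P.real {ω | u / a < exp (Y ω)} / P.real {ω | u < exp (X ω + Y ω)})
      atTop (𝓝 0) := by
  set T : ℝ → ℝ := fun u => P.real {ω | u < exp (Y ω)}
  set c := P.real {ω | 2 * a < exp (X ω)}
  have hc : 0 < c := measureReal_lt_exp_pos_of_eventually hXpos _
  have hscale : Tendsto (fun u => u / (2 * a)) atTop atTop :=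
    tendsto_id.atTop_div_const (by positivity)
  have hlim := ((hY 2 one_lt_two).comp hscale).const_mul c⁻¹
  rw [mul_zero] at hlim
  refine squeeze_zero' (.of_forall fun u => div_nonneg measureReal_nonneg measureReal_nonneg)
    ?_ hlim
  filter_upwards [eventually_ge_atTop 0, hscale.eventually hYpos] with u hu hTpos
  have hlow : c * T (u / (2 * a)) ≤ P.real {ω | u < exp (X ω + Y ω)} := by
    have hmul := hXY.mul_measureReal_lt_exp_le (by positivity : 0 ≤ 2 * a)
      (by positivity : 0 ≤ u / (2 * a))
    rwa [mul_div_cancel₀ _ (by positivity)] at hmul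
  have hdouble : u / a = 2 * (u / (2 * a)) := by field_simp
  calc P.real {ω | u / a < exp (Y ω)} / P.real {ω | u < exp (X ω + Y ω)}
      ≤ T (2 * (u / (2 * a))) / (c * T (u / (2 * a))) := by
        rw [← hdouble]
        exact div_le_div_of_nonneg_left measureReal_nonneg (by positivity) hlow
    _ = c⁻¹ * (T (2 * (u / (2 * a))) / T (u / (2 * a))) := by field_simp

theorem asymEquiv_measureReal_lt_exp_add (hXY : IndepFun X Y P)
    (hXpos : ∀ᶠ u in atTop, 0 < P.real {ω | u < exp (X ω)})
    (hYpos : ∀ᶠ u in atTop, 0 < P.real {ω | u < exp (Y ω)})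
    (hX : RapidVary fun u => P.real {ω | u < exp (X ω)})
    (hY : RapidVary fun u => P.real {ω | u < exp (Y ω)}) {a : ℝ} (ha : 0 < a) :
    AsymEquiv (fun u => P.real {ω | u < exp (X ω + Y ω)})
      (fun u => P.real {ω | u < exp (X ω + Y ω) ∧ a < exp (X ω) ∧ a < exp (Y ω)}) := by
  have hXsmall :=
    hXY.symm.tendsto_measureReal_lt_exp_div_measureReal_lt_exp_add hYpos hXpos hX ha
  simp only [add_comm (Y _) (X _)] at hXsmall
  refine asymEquiv_of_le_of_le_add (.of_forall fun u => measureReal_mono fun ω hω => hω.1)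
    (.of_forall (measureReal_lt_exp_add_le ha))
    (hXY.eventually_measureReal_lt_exp_add_pos hXpos hYpos) ?_
  simpa only [add_div, add_zero] using
    hXsmall.add (hXY.tendsto_measureReal_lt_exp_div_measureReal_lt_exp_add hXpos hYpos hY ha)

end ProbabilityTheory.IndepFun

end ExpTails

theorem product_lognormal_both_large_general
    {Ω : Type*} [MeasurableSpace Ω] (P : Measure Ω) [IsProbabilityMeasure P]
    (L₁ L₂ : ℝ → ℝ) (β₁ β₂ : ℝ)
    (hL₁ : RegVary L₁ β₁) (hL₂ : RegVary L₂ β₂)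
    (Z₁ Z₂ : Ω → ℝ)
    (hindep : IndepFun Z₁ Z₂ P)
    (hZ₁ : AsymEquiv (fun u => (P {ω | u < exp (Z₁ ω)}).toReal)
      (fun u => L₁ u * stdGaussianSurvival (log u)))
    (hZ₂ : AsymEquiv (fun u => (P {ω | u < exp (Z₂ ω)}).toReal)
      (fun u => L₂ u * stdGaussianSurvival (log u)))
    (σ₁ σ₂ : ℝ) (hσ₁ : 0 < σ₁) (hσ₂ : 0 < σ₂) :
    ∀ a > (0 : ℝ),
      AsymEquiv
        (fun u => (P {ω | u < exp (σ₁ * Z₁ ω + σ₂ * Z₂ ω)}).toReal)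
        (fun u => (P {ω | u < exp (σ₁ * Z₁ ω + σ₂ * Z₂ ω) ∧
            a < exp (σ₁ * Z₁ ω) ∧ a < exp (σ₂ * Z₂ ω)}).toReal) := by
  intro a ha
  have hscaled : IndepFun (fun ω => σ₁ * Z₁ ω) (fun ω => σ₂ * Z₂ ω) P :=
    hindep.comp (measurable_const_mul σ₁) (measurable_const_mul σ₂)
  exact hscaled.asymEquiv_measureReal_lt_exp_add
    (eventually_measureReal_lt_exp_const_mul_pos hZ₁ hσ₁)
    (eventually_measureReal_lt_exp_const_mul_pos hZ₂ hσ₂)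
    (rapidVary_measureReal_lt_exp_const_mul hL₁ hZ₁ hσ₁)
    (rapidVary_measureReal_lt_exp_const_mul hL₂ hZ₂ hσ₂) ha

/-- Equation (13): the tail of the product is dominated by the event where both
factors are large. -/
theorem product_lognormal_both_large
    {Ω : Type*} [MeasurableSpace Ω] (P : Measure Ω) [IsProbabilityMeasure P]
    (L₁ L₂ : ℝ → ℝ) (β₁ β₂ : ℝ)
    (hL₁pos : ∀ u > (0 : ℝ), 0 < L₁ u) (hL₂pos : ∀ u > (0 : ℝ), 0 < L₂ u)
    (hL₁ : RegVary L₁ β₁) (hL₂ : RegVary L₂ β₂)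
    (Z₁ Z₂ : Ω → ℝ) (hZ₁meas : Measurable Z₁) (hZ₂meas : Measurable Z₂)
    (hindep : IndepFun Z₁ Z₂ P)
    (hZ₁ : AsymEquiv (fun u => (P {ω | u < exp (Z₁ ω)}).toReal)
      (fun u => L₁ u * stdGaussianSurvival (log u)))
    (hZ₂ : AsymEquiv (fun u => (P {ω | u < exp (Z₂ ω)}).toReal)
      (fun u => L₂ u * stdGaussianSurvival (log u)))
    (σ₁ σ₂ : ℝ) (hσ₁ : 0 < σ₁) (hσ₂ : 0 < σ₂) :
    ∀ a > (0 : ℝ),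
      AsymEquiv
        (fun u => (P {ω | u < exp (σ₁ * Z₁ ω + σ₂ * Z₂ ω)}).toReal)
        (fun u => (P {ω | u < exp (σ₁ * Z₁ ω + σ₂ * Z₂ ω) ∧
            a < exp (σ₁ * Z₁ ω) ∧ a < exp (σ₂ * Z₂ ω)}).toReal) :=
  product_lognormal_both_large_general P L₁ L₂ β₁ β₂ hL₁ hL₂ Z₁ Z₂ hindep hZ₁ hZ₂ σ₁ σ₂ hσ₁ hσ₂
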